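/- arXiv:2603.04624 — 3 statements merged into one kernel-verified Lean document; each statement's English description precedes it below -/
import Mathlib

section
/- Let V and W be bounded antichain-decomposable persistence modules over ℝ^d and let [p, q] be a segment of ℝ^d. Then [p, q] ∈ Seg_{V,W} if and only if (p ∈ ℝ^d_{V,W} and q ∈ ℝ^d_V) or (q ∈ ℝ^d_{V,W} and p ∈ ℝ^d_V). -/
open CategoryTheory CategoryTheory.Limits

noncomputable section

/-- Two elements `p q` of a subset `S` of a poset are order-connected in `S` if there is a
finite sequence of elements of `S` from `p` to `q` with consecutive terms comparable. -/
def OrderConnIn {P : Type} [PartialOrder P] (S : Set P) (p q : P) : Prop :=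
  p ∈ S ∧ Relation.ReflTransGen (fun a b => b ∈ S ∧ (a ≤ b ∨ b ≤ a)) p q

/-- A subset `S` of a poset is convex if `p ≤ r ≤ q` with `p, q ∈ S` implies `r ∈ S`. -/
def IsConvexSubset {P : Type} [PartialOrder P] (S : Set P) : Prop :=
  ∀ ⦃p r q : P⦄, p ∈ S → q ∈ S → p ≤ r → r ≤ q → r ∈ S

/-- An interval of a poset: a convex subset any two of whose elements are order-connected. -/
def IsPosetInterval {P : Type} [PartialOrder P] (S : Set P) : Prop :=
  IsConvexSubset S ∧ ∀ p ∈ S, ∀ q ∈ S, OrderConnIn S p q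

open Classical in
/-- The submodule of `F` which is everything at points of `I` and zero elsewhere. -/
def indSub (F : Type) [Field F] {P : Type} (I : Set P) (p : P) : Submodule F F :=
  if p ∈ I then ⊤ else ⊥

open Classical in
/-- The canonical map between submodules of `F`: the inclusion when it exists, zero otherwise. -/
def indMap (F : Type) [Field F] (S T : Submodule F F) : S →ₗ[F] T :=
  if h : S ≤ T then Submodule.inclusion h else 0

theorem indSub_subsingleton {F : Type} [Field F] {P : Type} {I : Set P} {p : P}
    (hp : p ∉ I) : Subsingleton (indSub F I p) := by
  rw [indSub, if_neg hp]
  infer_instance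

theorem indMap_comp (F : Type) [Field F] {P : Type} [PartialOrder P] {I : Set P}
    (hI : IsConvexSubset I) {p q r : P} (hpq : p ≤ q) (hqr : q ≤ r) :
    (indMap F (indSub F I q) (indSub F I r)).comp (indMap F (indSub F I p) (indSub F I q))
      = indMap F (indSub F I p) (indSub F I r) := by
  by_cases hp : p ∈ I
  · by_cases hr : r ∈ I
    · have hq : q ∈ I := hI hp hr hpq hqr
      have h1 : indSub F I p ≤ indSub F I q := by simp [indSub, hp, hq]
      have h2 : indSub F I q ≤ indSub F I r := by simp [indSub, hq, hr]
      have h3 : indSub F I p ≤ indSub F I r := h1.trans h2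
      simp only [indMap, dif_pos h1, dif_pos h2, dif_pos h3]
      ext x
      rfl
    · haveI := indSub_subsingleton (F := F) (I := I) hr
      exact LinearMap.ext fun x => Subsingleton.elim _ _
  · haveI := indSub_subsingleton (F := F) (I := I) hp
    apply LinearMap.ext
    intro x
    rw [Subsingleton.elim x 0]
    simp

/-- The indicator persistence module of a convex subset `I` of a poset `P`: it assigns `F` to
points of `I` and `0` to other points, with identity structure maps between points of `I` and
zero maps otherwise. -/
def indicatorModule (F : Type) [Field F] {P : Type} [PartialOrder P] (I : Set P)
    (hI : IsConvexSubset I) : P ⥤ ModuleCat.{0} F where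
  obj p := ModuleCat.of F (indSub F I p)
  map {p q} f := ModuleCat.ofHom (indMap F (indSub F I p) (indSub F I q))
  map_id p := by
    apply ModuleCat.hom_ext
    change indMap F (indSub F I p) (indSub F I p) = LinearMap.id
    simp only [indMap, dif_pos le_rfl]
    ext x
    rfl
  map_comp {p q r} f g := by
    apply ModuleCat.hom_ext
    change _ = (indMap F (indSub F I q) (indSub F I r)).comp
      (indMap F (indSub F I p) (indSub F I q))
    rw [indMap_comp F hI f.le g.le]
    rfl

/-- The support of a persistence module: the points where it is nonzero. -/
def suppMod (F : Type) [Field F] {P : Type} [PartialOrder P] (V : P ⥤ ModuleCat.{0} F) :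
    Set P := {p | Nontrivial (V.obj p)}

/-- The rank of the structure map of `V` associated to `p ≤ q`. -/
def rankMap (F : Type) [Field F] {P : Type} [PartialOrder P] (V : P ⥤ ModuleCat.{0} F)
    {p q : P} (h : p ≤ q) : ℕ :=
  Module.finrank F (LinearMap.range (V.map (homOfLE h)).hom)

/-- A persistence module is antichain-decomposable if it is isomorphic to a direct sum of
indicator modules of intervals whose elements are pairwise incomparable across distinct
summands. -/
def IsACD (F : Type) [Field F] {P : Type} [PartialOrder P] (V : P ⥤ ModuleCat.{0} F) : Prop :=
  ∃ (A : Type) (S : A → Set P) (hS : ∀ α, IsPosetInterval (S α)),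
    (∀ ⦃α β : A⦄, α ≠ β → ∀ p ∈ S α, ∀ q ∈ S β, ¬ p ≤ q ∧ ¬ q ≤ p) ∧
    Nonempty (V ≅ ∐ fun α => indicatorModule F (S α) (hS α).1)

/-- A persistence module is thin if it is pointwise of dimension `0` or `1`. -/
def IsThin (F : Type) [Field F] {P : Type} [PartialOrder P] (V : P ⥤ ModuleCat.{0} F) : Prop :=
  ∀ p : P, Module.rank F (V.obj p) = 0 ∨ Module.rank F (V.obj p) = 1

/-- We regard `ℝ^d` (with the product order) as a poset category. -/
instance (d : ℕ) : CategoryTheory.Category (Fin d → ℝ) := Preorder.smallCategory _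

open Classical in
/-- The rank invariant of `V` on the segment `[p, q]` (junk value `0` when `¬ p ≤ q`). -/
def rkInv (F : Type) [Field F] {d : ℕ} (V : (Fin d → ℝ) ⥤ ModuleCat.{0} F)
    (p q : Fin d → ℝ) : ℕ :=
  if h : p ≤ q then Module.finrank F (LinearMap.range (V.map (homOfLE h)).hom) else 0

/-- The rank invariant of `V` on the `ε`-thickening `[p - ε𝟙, q + ε𝟙]` of the segment `[p, q]`. -/
def rkShift (F : Type) [Field F] {d : ℕ} (V : (Fin d → ℝ) ⥤ ModuleCat.{0} F) (ε : ℝ)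
    (p q : Fin d → ℝ) : ℕ :=
  rkInv F V (fun i => p i - ε) (fun i => q i + ε)

/-- `ε` is a feasible erosion for the pair `(rk_V, rk_W)`: for every segment `[p, q]`,
`rk_V([p, q]^{+ε}) ≤ rk_W([p, q])` and `rk_W([p, q]^{+ε}) ≤ rk_V([p, q])`. -/
def Feasible (F : Type) [Field F] {d : ℕ} (V W : (Fin d → ℝ) ⥤ ModuleCat.{0} F) (ε : ℝ) :
    Prop :=
  ∀ p q : Fin d → ℝ, p ≤ q →
    rkShift F V ε p q ≤ rkInv F W p q ∧ rkShift F W ε p q ≤ rkInv F V p q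

/-- The erosion distance between the rank invariants of `V` and `W`. -/
def erosionDist (F : Type) [Field F] {d : ℕ} (V W : (Fin d → ℝ) ⥤ ModuleCat.{0} F) : ℝ :=
  sInf {ε : ℝ | 0 < ε ∧ Feasible F V W ε}

/-- `ℰ_{V,W}(I)` for the segment `I = [p, q]`. -/
def erosionPair (F : Type) [Field F] {d : ℕ} (V W : (Fin d → ℝ) ⥤ ModuleCat.{0} F)
    (p q : Fin d → ℝ) : ℝ :=
  sInf {ε : ℝ | 0 < ε ∧ rkShift F V ε p q ≤ rkInv F W p q ∧ rkShift F W ε p q ≤ rkInv F V p q}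

/-- `ℰ_V(I)` for the segment `I = [p, q]`. -/
def erosionOne (F : Type) [Field F] {d : ℕ} (V : (Fin d → ℝ) ⥤ ModuleCat.{0} F)
    (p q : Fin d → ℝ) : ℝ :=
  sInf {ε : ℝ | 0 < ε ∧ rkShift F V ε p q = 0}

/-- The segment `[p, q]` belongs to `Seg_{V,W}`, i.e. `rk_V([p, q]) = 1` and
`rk_W([p, q]) = 0`. -/
def SegMem (F : Type) [Field F] {d : ℕ} (V W : (Fin d → ℝ) ⥤ ModuleCat.{0} F)
    (p q : Fin d → ℝ) : Prop :=
  p ≤ q ∧ rkInv F V p q = 1 ∧ rkInv F W p q = 0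

/-- `V(u) ≅ F`. -/
def ptIsLine (F : Type) [Field F] {d : ℕ} (V : (Fin d → ℝ) ⥤ ModuleCat.{0} F)
    (u : Fin d → ℝ) : Prop :=
  Nonempty ((V.obj u) ≃ₗ[F] F)

/-- `ℝ^d_{V,W} = {u ∈ ℝ^d : V(u) ≅ F and W(u) = 0}`. -/
def RVW (F : Type) [Field F] {d : ℕ} (V W : (Fin d → ℝ) ⥤ ModuleCat.{0} F) :
    Set (Fin d → ℝ) :=
  {u | ptIsLine F V u ∧ Subsingleton (W.obj u)}

/-- `ℝ^d_V = {u ∈ ℝ^d : V(u) ≅ F}`. -/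
def RV (F : Type) [Field F] {d : ℕ} (V : (Fin d → ℝ) ⥤ ModuleCat.{0} F) :
    Set (Fin d → ℝ) :=
  {u | ptIsLine F V u}

/-- `ℰ^small_V(p) = sup_{q ≥ p} ℰ_V([p, q])`. -/
def erosionSmall (F : Type) [Field F] {d : ℕ} (V : (Fin d → ℝ) ⥤ ModuleCat.{0} F)
    (p : Fin d → ℝ) : ℝ :=
  sSup {x : ℝ | ∃ q : Fin d → ℝ, p ≤ q ∧ x = erosionOne F V p q}

/-- `ℰ^large_V(q) = sup_{p ≤ q} ℰ_V([p, q])`. -/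
def erosionLarge (F : Type) [Field F] {d : ℕ} (V : (Fin d → ℝ) ⥤ ModuleCat.{0} F)
    (q : Fin d → ℝ) : ℝ :=
  sSup {x : ℝ | ∃ p : Fin d → ℝ, p ≤ q ∧ x = erosionOne F V p q}

/-- `ℰ*(V, W) = max( sup_{p ∈ ℝ^d_{V,W}} ℰ^small_V(p), sup_{q ∈ ℝ^d_{V,W}} ℰ^large_V(q) )`. -/
def erosionStar (F : Type) [Field F] {d : ℕ} (V W : (Fin d → ℝ) ⥤ ModuleCat.{0} F) : ℝ :=
  max (sSup {x : ℝ | ∃ p ∈ RVW F V W, x = erosionSmall F V p})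
      (sSup {x : ℝ | ∃ q ∈ RVW F V W, x = erosionLarge F V q})

/-- A bounded antichain-decomposable module over `ℝ^d`: an ACD module whose support is a
bounded subset of `ℝ^d`. -/
def IsBoundedACD (F : Type) [Field F] {d : ℕ} (V : (Fin d → ℝ) ⥤ ModuleCat.{0} F) : Prop :=
  IsACD F V ∧ Bornology.IsBounded (suppMod F V)

/-
In an antichain-decomposable module `V ≅ ⊕_α 𝕀_{S_α}` each `V(u)` is `F` or `0`, according as
`u` lies in some `S_α` or not. If `p ≤ q` are both in the support, the antichain condition puts
them in the same summand `𝕀_{S_β}`, whose structure map is the identity of `F`; as the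
coprojection of `𝕀_{S_β}` is split, `V(p ≤ q)` is nonzero and `rk_V [p, q] = 1`. Otherwise
`rk_V [p, q] = 0`, and the characterization of `Seg_{V,W}` is a propositional consequence.
-/

section ZeroMorphisms

variable {C : Type*} [Category C] [HasZeroMorphisms C] {β : Type*}

theorem isZero_sigma_of_isZero (f : β → C) [HasCoproduct f] (h : ∀ b, IsZero (f b)) :
    IsZero (∐ f) :=
  (IsZero.iff_id_eq_zero _).2 (Sigma.hom_ext _ _ fun b => (h b).eq_of_src _ _)

theorem isIso_sigma_ι_of_isZero (f : β → C) [HasCoproduct f] (b : β)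
    (h : ∀ a, a ≠ b → IsZero (f a)) : IsIso (Sigma.ι f b) := by
  have : Epi (Sigma.ι f b) := ⟨fun g g' hgg' => Sigma.hom_ext _ _ fun a => by
    by_cases hab : a = b
    · subst hab
      exact hgg'
    · exact (h a hab).eq_of_src _ _⟩
  exact isIso_of_epi_of_isSplitMono _

variable {D : Type*} [Category D] [HasColimitsOfShape (Discrete β) C] (G : β → D ⥤ C)

theorem isZero_sigma_obj (d : D) (h : ∀ b, IsZero ((G b).obj d)) : IsZero ((∐ G).obj d) :=
  (isZero_sigma_of_isZero _ h).of_iso (sigmaObjIso G d)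

def sigmaObjIsoOfIsZero (d : D) (b : β) (h : ∀ a, a ≠ b → IsZero ((G a).obj d)) :
    (∐ G).obj d ≅ (G b).obj d :=
  have := isIso_sigma_ι_of_isZero (fun a => (G a).obj d) b h
  sigmaObjIso G d ≪≫ (asIso (Sigma.ι (fun a => (G a).obj d) b)).symm

theorem sigma_map_ne_zero {d d' : D} (f : d ⟶ d') (b : β) (hf : (G b).map f ≠ 0) :
    (∐ G).map f ≠ 0 := by
  intro h0
  have : Mono ((Sigma.ι G b).app d') :=
    inferInstanceAs (Mono (((evaluation D C).obj d').map (Sigma.ι G b)))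
  refine hf (zero_of_comp_mono ((Sigma.ι G b).app d') ?_)
  rw [(Sigma.ι G b).naturality, h0, comp_zero]

end ZeroMorphisms

section Indicator

variable {F : Type} [Field F] {P : Type} [PartialOrder P] {I : Set P} (hI : IsConvexSubset I)

theorem isZero_indicatorModule_obj {u : P} (hu : u ∉ I) :
    IsZero ((indicatorModule F I hI).obj u) :=
  @ModuleCat.isZero_of_subsingleton _ _ _ (indSub_subsingleton hu)

def indicatorModuleObjEquiv {u : P} (hu : u ∈ I) : (indicatorModule F I hI).obj u ≃ₗ[F] F :=
  (LinearEquiv.ofEq _ _ (if_pos hu)).trans Submodule.topEquiv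

theorem indicatorModule_map_ne_zero {p q : P} (hp : p ∈ I) (hq : q ∈ I) (f : p ⟶ q) :
    (indicatorModule F I hI).map f ≠ 0 := by
  intro h0
  have h1 : (1 : F) ∈ indSub F I p := by simp [indSub, hp]
  have hle : indSub F I p ≤ indSub F I q := by simp [indSub, hp, hq]
  have hmap : ((indicatorModule F I hI).map f).hom = Submodule.inclusion hle := dif_pos hle
  rw [h0, ModuleCat.hom_zero] at hmap
  exact zero_ne_one (congrArg Subtype.val (LinearMap.congr_fun hmap ⟨1, h1⟩))

end Indicator

section Rank

variable {F : Type} [Field F] {P : Type} [PartialOrder P] {V U : P ⥤ ModuleCat.{0} F} {p q : P}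

theorem rankMap_eq_zero_of_isZero (h : p ≤ q) (hpq : IsZero (V.obj p) ∨ IsZero (V.obj q)) :
    rankMap F V h = 0 := by
  have h0 : V.map (homOfLE h) = 0 :=
    hpq.elim (fun hp => hp.eq_of_src _ _) fun hq => hq.eq_of_tgt _ _
  rw [rankMap, h0, ModuleCat.hom_zero, LinearMap.range_zero, finrank_bot]

theorem rankMap_eq_one_of_map_ne_zero (h : p ≤ q) (E : V.obj p ≃ₗ[F] F)
    (hne : V.map (homOfLE h) ≠ 0) : rankMap F V h = 1 := by
  have : Module.Finite F (V.obj p) := Module.Finite.equiv E.symm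
  refine le_antisymm ?_ ?_
  · calc rankMap F V h ≤ Module.finrank F (V.obj p) := LinearMap.finrank_range_le _
      _ = 1 := by rw [E.finrank_eq, Module.finrank_self]
  · rw [Nat.one_le_iff_ne_zero, rankMap, Ne, Submodule.finrank_eq_zero, LinearMap.range_eq_bot]
    exact fun h0 => hne (ModuleCat.hom_ext h0)

theorem rankMap_congr (e : V ≅ U) (h : p ≤ q) : rankMap F V h = rankMap F U h := by
  have hV : (V.map (homOfLE h)).hom = (e.app q).toLinearEquiv.symm.toLinearMap ∘ₗ
      (U.map (homOfLE h)).hom ∘ₗ (e.app p).toLinearEquiv.toLinearMap := by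
    rw [← NatIso.naturality_2 e (homOfLE h)]
    rfl
  rw [rankMap, rankMap, hV, LinearMap.range_comp,
    LinearMap.range_comp_of_range_eq_top _ (LinearEquiv.range _), LinearEquiv.finrank_map_eq]

end Rank

section SigmaIndicator

open Function

variable (F : Type) [Field F] {P : Type} [PartialOrder P] {A : Type}

abbrev sigmaIndicator (S : A → Set P) (hS : ∀ α, IsConvexSubset (S α)) : P ⥤ ModuleCat.{0} F :=
  ∐ fun α => indicatorModule F (S α) (hS α)

variable {F} {S : A → Set P} (hS : ∀ α, IsConvexSubset (S α))

theorem isZero_sigmaIndicator_obj {u : P} (hu : ∀ α, u ∉ S α) :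
    IsZero ((sigmaIndicator F S hS).obj u) :=
  isZero_sigma_obj _ u fun α => isZero_indicatorModule_obj (hS α) (hu α)

def sigmaIndicatorObjEquiv (hdisj : Pairwise (Disjoint on S)) {u : P} {β : A} (hu : u ∈ S β) :
    (sigmaIndicator F S hS).obj u ≃ₗ[F] F :=
  (sigmaObjIsoOfIsZero _ u β fun _ hα => isZero_indicatorModule_obj _
    fun huα => Set.disjoint_left.1 (hdisj hα) huα hu).toLinearEquiv.trans
    (indicatorModuleObjEquiv (hS β) hu)

theorem rankMap_sigmaIndicator (hdisj : Pairwise (Disjoint on S)) {p q : P} (h : p ≤ q) {β : A}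
    (hp : p ∈ S β) (hq : q ∈ S β) : rankMap F (sigmaIndicator F S hS) h = 1 :=
  rankMap_eq_one_of_map_ne_zero h (sigmaIndicatorObjEquiv hS hdisj hp)
    (sigma_map_ne_zero _ _ β (indicatorModule_map_ne_zero (hS β) hp hq _))

theorem exists_mem_of_not_isZero {V : P ⥤ ModuleCat.{0} F} (e : V ≅ sigmaIndicator F S hS)
    {u : P} (hu : ¬ IsZero (V.obj u)) : ∃ α, u ∈ S α := by
  by_contra! hnot
  exact hu ((isZero_sigmaIndicator_obj hS hnot).of_iso (e.app u))

end SigmaIndicator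

section ACD

open Function

variable {F : Type} [Field F] {P : Type} [PartialOrder P] {V : P ⥤ ModuleCat.{0} F}

theorem pairwise_disjoint_of_incomparable {A : Type} {S : A → Set P}
    (h : ∀ ⦃α β : A⦄, α ≠ β → ∀ p ∈ S α, ∀ q ∈ S β, ¬ p ≤ q ∧ ¬ q ≤ p) :
    Pairwise (Disjoint on S) :=
  fun _ _ hne => Set.disjoint_left.2 fun u hα hβ => (h hne u hα u hβ).1 le_rfl

theorem IsACD.isZero_or_nonempty_linearEquiv (hV : IsACD F V) (u : P) :
    IsZero (V.obj u) ∨ Nonempty (V.obj u ≃ₗ[F] F) := by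
  obtain ⟨A, S, hS, hanti, ⟨e⟩⟩ := hV
  refine or_iff_not_imp_left.2 fun hu => ?_
  obtain ⟨α, hα⟩ := exists_mem_of_not_isZero _ e hu
  exact ⟨(e.app u).toLinearEquiv.trans
    (sigmaIndicatorObjEquiv _ (pairwise_disjoint_of_incomparable hanti) hα)⟩

theorem IsACD.rankMap_eq_one (hV : IsACD F V) {p q : P} (h : p ≤ q)
    (hp : ¬ IsZero (V.obj p)) (hq : ¬ IsZero (V.obj q)) : rankMap F V h = 1 := by
  obtain ⟨A, S, hS, hanti, ⟨e⟩⟩ := hV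
  obtain ⟨α, hpα⟩ := exists_mem_of_not_isZero _ e hp
  obtain ⟨β, hqβ⟩ := exists_mem_of_not_isZero _ e hq
  obtain rfl : α = β := by_contra fun hne => (hanti hne p hpα q hqβ).1 h
  rw [rankMap_congr e h]
  exact rankMap_sigmaIndicator _ (pairwise_disjoint_of_incomparable hanti) h hpα hqβ

theorem IsACD.rankMap_eq_one_iff (hV : IsACD F V) {p q : P} (h : p ≤ q) :
    rankMap F V h = 1 ↔ ¬ IsZero (V.obj p) ∧ ¬ IsZero (V.obj q) := by
  refine ⟨fun h1 => ?_, fun hpq => hV.rankMap_eq_one h hpq.1 hpq.2⟩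
  by_contra! hpq
  rw [rankMap_eq_zero_of_isZero h (or_iff_not_imp_left.2 hpq)] at h1
  exact zero_ne_one h1

theorem IsACD.rankMap_eq_zero_iff (hV : IsACD F V) {p q : P} (h : p ≤ q) :
    rankMap F V h = 0 ↔ IsZero (V.obj p) ∨ IsZero (V.obj q) := by
  refine ⟨fun h0 => ?_, rankMap_eq_zero_of_isZero h⟩
  by_contra! hpq
  rw [hV.rankMap_eq_one h hpq.1 hpq.2] at h0
  exact one_ne_zero h0

end ACD

section Euclidean

variable {F : Type} [Field F] {d : ℕ} {V : (Fin d → ℝ) ⥤ ModuleCat.{0} F}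

theorem rkInv_eq_rankMap {p q : Fin d → ℝ} (h : p ≤ q) : rkInv F V p q = rankMap F V h :=
  dif_pos h

theorem IsACD.ptIsLine_iff (hV : IsACD F V) (u : Fin d → ℝ) :
    ptIsLine F V u ↔ ¬ IsZero (V.obj u) := by
  refine ⟨fun ⟨E⟩ hu => ?_, (hV.isZero_or_nonempty_linearEquiv u).resolve_left⟩
  have := ModuleCat.subsingleton_of_isZero hu
  exact not_subsingleton F E.symm.toEquiv.subsingleton

end Euclidean

/-- a segment `[p, q]` belongs to `Seg_{V,W}` if and only if
(`p ∈ ℝ^d_{V,W}` and `q ∈ ℝ^d_V`) or (`q ∈ ℝ^d_{V,W}` and `p ∈ ℝ^d_V`). -/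
theorem segVW_characterization (F : Type) [Field F] {d : ℕ}
    (V W : (Fin d → ℝ) ⥤ ModuleCat.{0} F)
    (hV : IsBoundedACD F V) (hW : IsBoundedACD F W)
    (p q : Fin d → ℝ) (hpq : p ≤ q) :
    SegMem F V W p q ↔
      (p ∈ RVW F V W ∧ q ∈ RV F V) ∨ (q ∈ RVW F V W ∧ p ∈ RV F V) := by
  simp only [SegMem, RVW, RV, Set.mem_ofPred_eq, rkInv_eq_rankMap hpq, hV.1.rankMap_eq_one_iff,
    hW.1.rankMap_eq_zero_iff, hV.1.ptIsLine_iff, ← ModuleCat.isZero_iff_subsingleton]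
  tauto
end
end

section
/- Let V be a pointwise finite-dimensional rank-maximal persistence module over a poset P and let i ≥ 1. Then the superlevel set supp^(i) V = {p ∈ P : dim V(p) ≥ i} is a convex subset of P; consequently the superlevel module V^(i) = 𝕀_{supp^(i) V} is a thin persistence module with convex support. -/
/-! For `p ≤ r ≤ q` with `p, q` in the superlevel set, the structure map `V p → V q` has rank
`min (dim V p) (dim V q) ≥ i` and factors through `V r`, so `dim V r ≥ i`. An indicator module
is pointwise `F` or `0`, hence thin, and its support is the indexing set. -/

open CategoryTheory CategoryTheory.Limits

noncomputable section

/-- A persistence module is rank-maximal if the rank of each structure map is the minimum of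
the dimensions of its domain and codomain. -/
def RankMaximal (F : Type) [Field F] {P : Type} [PartialOrder P] (V : P ⥤ ModuleCat.{0} F) :
    Prop :=
  ∀ ⦃p q : P⦄ (h : p ≤ q),
    rankMap F V h = min (Module.finrank F (V.obj p)) (Module.finrank F (V.obj q))

/-- The `i`-th superlevel set of a persistence module: the points of dimension at least `i`. -/
def suppLevel (F : Type) [Field F] {P : Type} [PartialOrder P] (V : P ⥤ ModuleCat.{0} F)
    (i : ℕ) : Set P := {p | i ≤ Module.finrank F (V.obj p)}

theorem suppLevel_convex (F : Type) [Field F] {P : Type} [PartialOrder P]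
    (V : P ⥤ ModuleCat.{0} F) (hfd : ∀ p, FiniteDimensional F (V.obj p))
    (hrm : RankMaximal F V) (i : ℕ) : IsConvexSubset (suppLevel F V i) := by
  intro p r q hp hq hpr hrq
  haveI := hfd r
  haveI := hfd q
  have hfac : V.map (homOfLE (hpr.trans hrq)) = V.map (homOfLE hpr) ≫ V.map (homOfLE hrq) := by
    rw [← V.map_comp]
    rfl
  have h1 : rankMap F V (hpr.trans hrq) ≤ Module.finrank F (V.obj r) := by
    rw [rankMap, hfac]
    calc Module.finrank F (LinearMap.range ((V.map (homOfLE hrq)).hom.comp (V.map (homOfLE hpr)).hom))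
        ≤ Module.finrank F (LinearMap.range (V.map (homOfLE hrq)).hom) :=
          Submodule.finrank_mono (LinearMap.range_comp_le_range _ _)
      _ ≤ Module.finrank F (V.obj r) := LinearMap.finrank_range_le _
  exact le_trans (le_trans (le_min hp hq) (hrm (hpr.trans hrq)).ge) h1

/-- The `i`-th superlevel module of a rank-maximal pointwise finite-dimensional persistence
module: the indicator module of the `i`-th superlevel set. -/
def superMod (F : Type) [Field F] {P : Type} [PartialOrder P] (V : P ⥤ ModuleCat.{0} F)
    (hfd : ∀ p, FiniteDimensional F (V.obj p)) (hrm : RankMaximal F V) (i : ℕ) :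
    P ⥤ ModuleCat.{0} F :=
  indicatorModule F (suppLevel F V i) (suppLevel_convex F V hfd hrm i)

section IndicatorModule

variable {F : Type} [Field F] {P : Type}

theorem indSub_of_mem {I : Set P} {p : P} (hp : p ∈ I) : indSub F I p = ⊤ :=
  if_pos hp

theorem indSub_of_notMem {I : Set P} {p : P} (hp : p ∉ I) : indSub F I p = ⊥ :=
  if_neg hp

open Classical in
theorem rank_indSub (I : Set P) (p : P) :
    Module.rank F (indSub F I p) = if p ∈ I then 1 else 0 := by
  by_cases hp : p ∈ I
  · rw [indSub_of_mem hp, if_pos hp, rank_top, Module.rank_self]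
  · rw [indSub_of_notMem hp, if_neg hp, rank_bot]

variable [PartialOrder P]

theorem isThin_indicatorModule (I : Set P) (hI : IsConvexSubset I) :
    IsThin F (indicatorModule F I hI) := by
  intro p
  change Module.rank F (indSub F I p) = 0 ∨ Module.rank F (indSub F I p) = 1
  rw [rank_indSub]
  split_ifs <;> simp

theorem suppMod_indicatorModule (I : Set P) (hI : IsConvexSubset I) :
    suppMod F (indicatorModule F I hI) = I := by
  ext p
  change Nontrivial (indSub F I p) ↔ p ∈ I
  rw [← rank_pos_iff_nontrivial (R := F), rank_indSub]
  split_ifs <;> simpa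

end IndicatorModule

theorem superlevel_convex_thin_general (F : Type) [Field F] {P : Type} [PartialOrder P]
    (V : P ⥤ ModuleCat.{0} F) (hfd : ∀ p, FiniteDimensional F (V.obj p))
    (hrm : RankMaximal F V) (i : ℕ) :
    ∃ hconv : IsConvexSubset (suppLevel F V i),
      IsThin F (indicatorModule F (suppLevel F V i) hconv) ∧
      IsConvexSubset (suppMod F (indicatorModule F (suppLevel F V i) hconv)) := by
  have hconv := suppLevel_convex F V hfd hrm i
  refine ⟨hconv, isThin_indicatorModule _ hconv, ?_⟩
  rwa [suppMod_indicatorModule]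

/-- for a pointwise finite-dimensional rank-maximal persistence module, each
superlevel set `supp^(i) V` (for `i ≥ 1`) is convex, and the corresponding superlevel module
(the indicator module of `supp^(i) V`) is a thin persistence module with convex support. -/
theorem superlevel_convex_thin (F : Type) [Field F] {P : Type} [PartialOrder P]
    (V : P ⥤ ModuleCat.{0} F) (hfd : ∀ p, FiniteDimensional F (V.obj p))
    (hrm : RankMaximal F V) (i : ℕ) (hi : 1 ≤ i) :
    ∃ hconv : IsConvexSubset (suppLevel F V i),
      IsThin F (indicatorModule F (suppLevel F V i) hconv) ∧
      IsConvexSubset (suppMod F (indicatorModule F (suppLevel F V i) hconv)) :=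
  superlevel_convex_thin_general F V hfd hrm i

end
end

section
/- Let V and W be pointwise finite-dimensional rank-maximal persistence modules over ℝ^d with bounded support, and let M = max( sup_p dim V(p), sup_p dim W(p) ) < ∞. Then the erosion distance satisfies d_E(rk_V, rk_W) = max_{1 ≤ i ≤ M} d_E(rk_{V^(i)}, rk_{W^(i)}), where V^(i) and W^(i) are the superlevel modules of V and W. -/
open CategoryTheory CategoryTheory.Limits

noncomputable section

/-!
For rank-maximal `V` the rank invariant is `rk_V [p, q] = min (dim V p) (dim V q)`, so the
superlevel modules threshold it: `rk_{V^(i)} [p, q] = 1` iff `i ≤ rk_V [p, q]`. A comparison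
`a ≤ b` of ranks bounded by `M` holds iff `i ≤ a → i ≤ b` for all `1 ≤ i ≤ M`, hence `ε` is
feasible for `(V, W)` iff it is feasible for every pair `(V^(i), W^(i))`. Feasible sets are
upward closed, so the infimum of their intersection is the maximum of their infima, provided the
intersection is nonempty; bounded supports give that for `d > 0`, and for `d = 0` every erosion
distance is `0`.
-/
open Module LinearMap

theorem Real.sInf_setOf_forall_mem_eq_sSup_sInf {ι : Type*} (s : Finset ι) (S : ι → Set ℝ)
    (hpos : ∀ i ∈ s, S i ⊆ Set.Ioi 0) (hup : ∀ i ∈ s, IsUpperSet (S i))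
    (hne : {ε : ℝ | 0 < ε ∧ ∀ i ∈ s, ε ∈ S i}.Nonempty) :
    sInf {ε : ℝ | 0 < ε ∧ ∀ i ∈ s, ε ∈ S i} = sSup {x | ∃ i ∈ s, x = sInf (S i)} := by
  have hinf_nonneg : ∀ i ∈ s, 0 ≤ sInf (S i) := fun i hi =>
    Real.sInf_nonneg fun x hx => (hpos i hi hx).le
  have hbdd : BddAbove {x | ∃ i ∈ s, x = sInf (S i)} :=
    ((s.finite_toSet.image fun i => sInf (S i)).subset
      (by rintro _ ⟨i, hi, rfl⟩; exact ⟨i, hi, rfl⟩)).bddAbove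
  refine le_antisymm (le_of_forall_gt_imp_ge_of_dense fun δ hδ => ?_) ?_
  · refine csInf_le ⟨0, fun x hx => hx.1.le⟩ ⟨?_, fun i hi => ?_⟩
    · refine (Real.sSup_nonneg ?_).trans_lt hδ
      rintro _ ⟨i, hi, rfl⟩
      exact hinf_nonneg i hi
    · obtain ⟨x, hx, hxδ⟩ := exists_lt_of_csInf_lt
        (hne.mono fun ε hε => hε.2 i hi) ((le_csSup hbdd ⟨i, hi, rfl⟩).trans_lt hδ)
      exact hup i hi hxδ.le hx
  · refine Real.sSup_le ?_ (le_csInf hne fun x hx => hx.1.le)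
    rintro _ ⟨i, hi, rfl⟩
    exact csInf_le_csInf ⟨0, fun x hx => (hpos i hi hx).le⟩ hne fun ε hε => hε.2 i hi

section

variable {F : Type} [Field F] {d : ℕ}

theorem rankMap_le_rankMap {P : Type} [PartialOrder P] (V : P ⥤ ModuleCat.{0} F)
    {a b c e : P} (hab : a ≤ b) (hbc : b ≤ c) (hce : c ≤ e) [FiniteDimensional F (V.obj c)] :
    rankMap F V (hab.trans (hbc.trans hce)) ≤ rankMap F V hbc := by
  have hfac : (V.map (homOfLE (hab.trans (hbc.trans hce)))).hom =
      (V.map (homOfLE hce)).hom ∘ₗ (V.map (homOfLE hbc)).hom ∘ₗ (V.map (homOfLE hab)).hom := by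
    rw [← ModuleCat.hom_comp, ← ModuleCat.hom_comp, ← V.map_comp, ← V.map_comp]
    rfl
  calc rankMap F V (hab.trans (hbc.trans hce))
      = finrank F ((((V.map (homOfLE hbc)).hom ∘ₗ (V.map (homOfLE hab)).hom).range).map
          (V.map (homOfLE hce)).hom) := by
        rw [rankMap, hfac, range_comp]
    _ ≤ finrank F ((V.map (homOfLE hbc)).hom ∘ₗ (V.map (homOfLE hab)).hom).range :=
        Submodule.finrank_map_le _ _
    _ ≤ rankMap F V hbc := Submodule.finrank_mono (range_comp_le_range _ _)

open Classical in
theorem finrank_range_indMap (S T : Submodule F F) :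
    finrank F (indMap F S T).range = if S ≤ T then finrank F S else 0 := by
  by_cases h : S ≤ T
  · rw [indMap, dif_pos h, if_pos h]
    exact finrank_range_of_inj (Submodule.inclusion_injective h)
  · rw [indMap, dif_neg h, if_neg h, range_zero, finrank_bot]

theorem rkInv_of_le (V : (Fin d → ℝ) ⥤ ModuleCat.{0} F) {p q : Fin d → ℝ} (h : p ≤ q) :
    rkInv F V p q = rankMap F V h := by
  rw [rkInv, dif_pos h]
  rfl

theorem rkInv_le_finrank (V : (Fin d → ℝ) ⥤ ModuleCat.{0} F) (p q : Fin d → ℝ)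
    [FiniteDimensional F (V.obj q)] : rkInv F V p q ≤ finrank F (V.obj q) := by
  unfold rkInv
  split_ifs
  exacts [Submodule.finrank_le _, Nat.zero_le _]

theorem rkInv_eq_zero_of_not_mem_suppMod (V : (Fin d → ℝ) ⥤ ModuleCat.{0} F)
    {p q : Fin d → ℝ} (h : p ∉ suppMod F V ∨ q ∉ suppMod F V) : rkInv F V p q = 0 := by
  unfold rkInv
  split_ifs with hpq
  · suffices (V.map (homOfLE hpq)).hom.range = ⊥ by rw [this, finrank_bot]
    rcases h with hp | hq
    · have : Subsingleton (V.obj p) := not_nontrivial_iff_subsingleton.mp hp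
      exact range_eq_bot.mpr (Subsingleton.elim _ _)
    · have : Subsingleton (V.obj q) := not_nontrivial_iff_subsingleton.mp hq
      exact Subsingleton.elim _ _
  · rfl

theorem RankMaximal.rkInv_eq {V : (Fin d → ℝ) ⥤ ModuleCat.{0} F} (hrm : RankMaximal F V)
    {p q : Fin d → ℝ} (h : p ≤ q) :
    rkInv F V p q = min (finrank F (V.obj p)) (finrank F (V.obj q)) := by
  rw [rkInv_of_le V h, hrm h]

open Classical in
theorem rkInv_indicatorModule (I : Set (Fin d → ℝ)) (hI : IsConvexSubset I)
    {p q : Fin d → ℝ} (h : p ≤ q) :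
    rkInv F (indicatorModule F I hI) p q = if p ∈ I ∧ q ∈ I then 1 else 0 := by
  rw [rkInv_of_le _ h]
  change finrank F (indMap F (indSub F I p) (indSub F I q)).range = _
  rw [finrank_range_indMap]
  by_cases hp : p ∈ I
  · have hp' : indSub F I p = ⊤ := if_pos hp
    by_cases hq : q ∈ I
    · have hq' : indSub F I q = ⊤ := if_pos hq
      rw [hp', hq', if_pos le_rfl, if_pos ⟨hp, hq⟩, finrank_top, finrank_self]
    · have hq' : indSub F I q = ⊥ := if_neg hq
      rw [hp', hq', if_neg fun h => top_ne_bot (le_bot_iff.mp h), if_neg fun h => hq h.2]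
  · have hp' : indSub F I p = ⊥ := if_neg hp
    rw [hp', finrank_bot, ite_self, if_neg fun h => hp h.1]

instance (V : (Fin d → ℝ) ⥤ ModuleCat.{0} F) (hfd : ∀ p, FiniteDimensional F (V.obj p))
    (hrm : RankMaximal F V) (i : ℕ) (p : Fin d → ℝ) :
    FiniteDimensional F ((superMod F V hfd hrm i).obj p) :=
  inferInstanceAs (FiniteDimensional F (indSub F _ p))

open Classical in
theorem rkInv_superMod (V : (Fin d → ℝ) ⥤ ModuleCat.{0} F)
    (hfd : ∀ p, FiniteDimensional F (V.obj p)) (hrm : RankMaximal F V) (i : ℕ)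
    {p q : Fin d → ℝ} (h : p ≤ q) :
    rkInv F (superMod F V hfd hrm i) p q = if i ≤ rkInv F V p q then 1 else 0 := by
  rw [superMod, rkInv_indicatorModule _ _ h, hrm.rkInv_eq h]
  exact if_congr (le_min_iff (α := ℕ)).symm rfl rfl

theorem sub_const_le_add_const {p q : Fin d → ℝ} (h : p ≤ q) {ε : ℝ} (hε : 0 ≤ ε) :
    (fun j => p j - ε) ≤ fun j => q j + ε :=
  fun j => by linarith [h j]

theorem rkShift_superMod (V : (Fin d → ℝ) ⥤ ModuleCat.{0} F)
    (hfd : ∀ p, FiniteDimensional F (V.obj p)) (hrm : RankMaximal F V) (i : ℕ)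
    {ε : ℝ} (hε : 0 ≤ ε) {p q : Fin d → ℝ} (h : p ≤ q) :
    rkShift F (superMod F V hfd hrm i) ε p q = if i ≤ rkShift F V ε p q then 1 else 0 :=
  rkInv_superMod V hfd hrm i (sub_const_le_add_const h hε)

theorem rkShift_antitone (U : (Fin d → ℝ) ⥤ ModuleCat.{0} F)
    [∀ p, FiniteDimensional F (U.obj p)] {p q : Fin d → ℝ} (hpq : p ≤ q)
    {ε ε' : ℝ} (hε : 0 ≤ ε) (hεε' : ε ≤ ε') :
    rkShift F U ε' p q ≤ rkShift F U ε p q := by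
  rw [rkShift, rkShift, rkInv_of_le U (sub_const_le_add_const hpq (hε.trans hεε')),
    rkInv_of_le U (sub_const_le_add_const hpq hε)]
  exact rankMap_le_rankMap U (fun j => by linarith) (sub_const_le_add_const hpq hε)
    (fun j => by linarith)

theorem Feasible.mono {U U' : (Fin d → ℝ) ⥤ ModuleCat.{0} F}
    [∀ p, FiniteDimensional F (U.obj p)] [∀ p, FiniteDimensional F (U'.obj p)]
    {ε ε' : ℝ} (hf : Feasible F U U' ε) (hε : 0 ≤ ε) (hεε' : ε ≤ ε') : Feasible F U U' ε' :=
  fun p q hpq => ⟨(rkShift_antitone U hpq hε hεε').trans (hf p q hpq).1,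
    (rkShift_antitone U' hpq hε hεε').trans (hf p q hpq).2⟩

theorem Nat.le_iff_forall_mem_Icc {a b M : ℕ} (ha : a ≤ M) :
    a ≤ b ↔ ∀ i ∈ Finset.Icc 1 M, i ≤ a → i ≤ b := by
  refine ⟨fun hab i _ hia => hia.trans hab, fun h => ?_⟩
  rcases Nat.eq_zero_or_pos a with rfl | ha0
  · exact Nat.zero_le b
  · exact h a (Finset.mem_Icc.mpr ⟨ha0, ha⟩) le_rfl

theorem Nat.ite_le_ite_iff_imp {P Q : Prop} [Decidable P] [Decidable Q] :
    ((if P then 1 else 0 : ℕ) ≤ if Q then 1 else 0) ↔ (P → Q) := by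
  split_ifs <;> simp_all

theorem feasible_iff_forall_superMod (V W : (Fin d → ℝ) ⥤ ModuleCat.{0} F)
    (hfdV : ∀ p, FiniteDimensional F (V.obj p)) (hfdW : ∀ p, FiniteDimensional F (W.obj p))
    (hrmV : RankMaximal F V) (hrmW : RankMaximal F W) {M : ℕ}
    (hMV : ∀ p, finrank F (V.obj p) ≤ M) (hMW : ∀ p, finrank F (W.obj p) ≤ M)
    {ε : ℝ} (hε : 0 ≤ ε) :
    Feasible F V W ε ↔ ∀ i ∈ Finset.Icc 1 M,
      Feasible F (superMod F V hfdV hrmV i) (superMod F W hfdW hrmW i) ε := by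
  have hlevel : ∀ p q : Fin d → ℝ, p ≤ q →
      ((rkShift F V ε p q ≤ rkInv F W p q ∧ rkShift F W ε p q ≤ rkInv F V p q) ↔
        ∀ i ∈ Finset.Icc 1 M,
          rkShift F (superMod F V hfdV hrmV i) ε p q ≤ rkInv F (superMod F W hfdW hrmW i) p q ∧
          rkShift F (superMod F W hfdW hrmW i) ε p q ≤ rkInv F (superMod F V hfdV hrmV i) p q) := by
    intro p q hpq
    have hV : rkShift F V ε p q ≤ M := (rkInv_le_finrank V _ _).trans (hMV _)
    have hW : rkShift F W ε p q ≤ M := (rkInv_le_finrank W _ _).trans (hMW _)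
    simp only [rkShift_superMod _ _ _ _ hε hpq, rkInv_superMod _ _ _ _ hpq, Nat.ite_le_ite_iff_imp,
      Nat.le_iff_forall_mem_Icc hV, Nat.le_iff_forall_mem_Icc hW]
    exact forall₂_and.symm
  exact ⟨fun hf i hi p q hpq => ((hlevel p q hpq).mp (hf p q hpq)) i hi,
    fun hf p q hpq => (hlevel p q hpq).mpr fun i hi => hf i hi p q hpq⟩

theorem exists_rkShift_eq_zero_of_isBounded (hd : 0 < d) {U : (Fin d → ℝ) ⥤ ModuleCat.{0} F}
    (hb : Bornology.IsBounded (suppMod F U)) :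
    ∃ C : ℝ, ∀ ε, C < ε → ∀ p q : Fin d → ℝ, p ≤ q → rkShift F U ε p q = 0 := by
  obtain ⟨C, hC⟩ := Metric.isBounded_iff.mp hb
  refine ⟨|C|, fun ε hε p q hpq => rkInv_eq_zero_of_not_mem_suppMod U ?_⟩
  by_contra! hmem
  let j : Fin d := ⟨0, hd⟩
  have hdist := (dist_le_pi_dist _ _ j).trans (hC hmem.1 hmem.2)
  rw [Real.dist_eq, abs_le] at hdist
  linarith [hpq j, hdist.1, le_abs_self C, abs_nonneg C]

theorem exists_feasible_of_isBounded (hd : 0 < d) {V W : (Fin d → ℝ) ⥤ ModuleCat.{0} F}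
    (hbV : Bornology.IsBounded (suppMod F V)) (hbW : Bornology.IsBounded (suppMod F W)) :
    ∃ ε, 0 < ε ∧ Feasible F V W ε := by
  obtain ⟨CV, hCV⟩ := exists_rkShift_eq_zero_of_isBounded hd hbV
  obtain ⟨CW, hCW⟩ := exists_rkShift_eq_zero_of_isBounded hd hbW
  refine ⟨|CV| + |CW| + 1, by positivity, fun p q hpq => ?_⟩
  rw [hCV _ (by linarith [le_abs_self CV, abs_nonneg CW]) p q hpq,
    hCW _ (by linarith [le_abs_self CW, abs_nonneg CV]) p q hpq]
  exact ⟨Nat.zero_le _, Nat.zero_le _⟩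

theorem erosionDist_fin_zero (U U' : (Fin 0 → ℝ) ⥤ ModuleCat.{0} F) :
    erosionDist F U U' = 0 := by
  have hshift : ∀ (V : (Fin 0 → ℝ) ⥤ ModuleCat.{0} F) ε p q, rkShift F V ε p q = rkInv F V p q :=
    fun V ε p q => by rw [rkShift, Subsingleton.elim (fun j => p j - ε) p,
      Subsingleton.elim (fun j => q j + ε) q]
  have hfeas : ∀ ε, Feasible F U U' ε ↔ Feasible F U U' 1 := fun ε => by
    simp only [Feasible, hshift]
  by_cases h : Feasible F U U' 1
  · have hset : {ε : ℝ | 0 < ε ∧ Feasible F U U' ε} = Set.Ioi 0 := by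
      ext ε
      simp [hfeas, h]
    rw [erosionDist, hset, csInf_Ioi]
  · have hset : {ε : ℝ | 0 < ε ∧ Feasible F U U' ε} = ∅ := by
      ext ε
      simp [hfeas, h]
    rw [erosionDist, hset, Real.sInf_empty]

end

theorem erosion_dist_eq_max_superlevel_general (F : Type) [Field F] {d : ℕ}
    (V W : (Fin d → ℝ) ⥤ ModuleCat.{0} F)
    (hfdV : ∀ p, FiniteDimensional F (V.obj p)) (hfdW : ∀ p, FiniteDimensional F (W.obj p))
    (hrmV : RankMaximal F V) (hrmW : RankMaximal F W)
    (hbV : Bornology.IsBounded (suppMod F V)) (hbW : Bornology.IsBounded (suppMod F W))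
    (M : ℕ)
    (hMV : ∀ p, Module.finrank F (V.obj p) ≤ M) (hMW : ∀ p, Module.finrank F (W.obj p) ≤ M) :
    erosionDist F V W =
      sSup {x : ℝ | ∃ i ∈ Finset.Icc 1 M,
        x = erosionDist F (superMod F V hfdV hrmV i) (superMod F W hfdW hrmW i)} := by
  rcases Nat.eq_zero_or_pos d with rfl | hd
  · simp only [erosionDist_fin_zero]
    refine (Real.sSup_nonneg ?_).antisymm (Real.sSup_nonpos ?_) <;>
      rintro _ ⟨i, -, rfl⟩ <;> rfl
  obtain ⟨ε₀, hε₀, hfeas₀⟩ := exists_feasible_of_isBounded hd hbV hbW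
  have hsuper := fun ε (hε : 0 < ε) =>
    feasible_iff_forall_superMod V W hfdV hfdW hrmV hrmW hMV hMW hε.le
  have hset : {ε | 0 < ε ∧ Feasible F V W ε} = {ε | 0 < ε ∧ ∀ i ∈ Finset.Icc 1 M,
      ε ∈ {ε | 0 < ε ∧ Feasible F (superMod F V hfdV hrmV i) (superMod F W hfdW hrmW i) ε}} := by
    ext ε
    exact and_congr_right fun hε =>
      (hsuper ε hε).trans (forall₂_congr fun i _ => (and_iff_right hε).symm)
  rw [erosionDist, hset, Real.sInf_setOf_forall_mem_eq_sSup_sInf]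
  · rfl
  · exact fun i _ ε hε => hε.1
  · exact fun i _ ε ε' hεε' hε => ⟨hε.1.trans_le hεε', hε.2.mono hε.1.le hεε'⟩
  · exact ⟨ε₀, hε₀, fun i hi => ⟨hε₀, (hsuper ε₀ hε₀).mp hfeas₀ i hi⟩⟩

/-- for pointwise finite-dimensional rank-maximal modules over `ℝ^d` with
bounded support whose pointwise dimensions have maximum `M`, the erosion distance equals the
maximum over `i = 1, …, M` of the erosion distances between the superlevel modules. -/
theorem erosion_dist_eq_max_superlevel (F : Type) [Field F] {d : ℕ}
    (V W : (Fin d → ℝ) ⥤ ModuleCat.{0} F)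
    (hfdV : ∀ p, FiniteDimensional F (V.obj p)) (hfdW : ∀ p, FiniteDimensional F (W.obj p))
    (hrmV : RankMaximal F V) (hrmW : RankMaximal F W)
    (hbV : Bornology.IsBounded (suppMod F V)) (hbW : Bornology.IsBounded (suppMod F W))
    (M : ℕ)
    (hMV : ∀ p, Module.finrank F (V.obj p) ≤ M) (hMW : ∀ p, Module.finrank F (W.obj p) ≤ M)
    (hMmax : (∃ p, Module.finrank F (V.obj p) = M) ∨ (∃ p, Module.finrank F (W.obj p) = M)) :
    erosionDist F V W =
      sSup {x : ℝ | ∃ i ∈ Finset.Icc 1 M,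
        x = erosionDist F (superMod F V hfdV hrmV i) (superMod F W hfdW hrmW i)} :=
  erosion_dist_eq_max_superlevel_general F V W hfdV hfdW hrmV hrmW hbV hbW M hMV hMW
end
end
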